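/- Let G have arboricity α, let ε > 0, β ≥ (2+ε)α, and let ℓ = ℓ_β be the natural β-partition. For any x > 1, the set of vertices v that fail to satisfy both |D(ℓ, v)| ≤ x² and ℓ(v) ≤ log_{β+1} x has size at most |V| · 2^{1 − log x / log_{β/(2α)}(β+1)}. -/

import Mathlib

open Classical

variable {V : Type*}

/-- `G` has arboricity at most `a`: every subgraph `H` with at least `2` vertices
satisfies `⌈|E(H)|/(|V(H)|-1)⌉ ≤ a`, i.e. `|E(H)| ≤ a * (|V(H)| - 1)`. -/
def HasArboricity (G : SimpleGraph V) (a : ℕ) : Prop :=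
  ∀ H : G.Subgraph, 2 ≤ H.verts.ncard → H.edgeSet.ncard ≤ a * (H.verts.ncard - 1)

/-- Vertices assigned a layer `≤ i` in the iterative construction of the
`S`-induced `β`-partition. -/
noncomputable def assignedUpTo (G : SimpleGraph V) (S : Set V) (β : ℕ) : ℕ → Set V
  | 0 => {v | v ∈ S ∧ (G.neighborSet v).ncard ≤ β}
  | (i+1) => assignedUpTo G S β i ∪
      {v | v ∈ S ∧ ((G.neighborSet v) \ assignedUpTo G S β i).ncard ≤ β}

/-- The `S`-induced `β`-partition `σ_{S,β} : V → ℕ∞`. -/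
noncomputable def indSigma (G : SimpleGraph V) (S : Set V) (β : ℕ) (v : V) : ℕ∞ :=
  if _h : ∃ i, v ∈ assignedUpTo G S β i then (sInf {i | v ∈ assignedUpTo G S β i} : ℕ) else ⊤

/-- Auxiliary definition of the dependency graph, by fuel on the layer. -/
noncomputable def depAux (G : SimpleGraph V) (σ : V → ℕ∞) : ℕ → V → Set V
  | 0, v => if σ v = 0 then {v} else ∅
  | (n+1), v => if σ v = ((n+1 : ℕ) : ℕ∞)
      then insert v (⋃ w ∈ {w | G.Adj v w ∧ σ w < σ v}, depAux G σ n w)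
      else depAux G σ n v

/-- The dependency graph `D(σ, v)`. -/
noncomputable def depGraph (G : SimpleGraph V) (σ : V → ℕ∞) (v : V) : Set V :=
  depAux G σ (σ v).toNat v

/-- A partial `β`-partition: every node with finite layer has at most `β`
neighbors in equal or higher layers. -/
def IsPartialBetaPartition (G : SimpleGraph V) (β : ℕ) (lam : V → ℕ∞) : Prop :=
  ∀ v, lam v ≠ ⊤ → {w | G.Adj v w ∧ lam v ≤ lam w}.ncard ≤ β

/-!
Put `i = ⌊log_{β+1} x⌋`. A bad vertex either is not assigned a layer `≤ i`, or lies in a layer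
`≤ i` and has `|D(ℓ, v)| > x²`.

Arboricity `α` leaves at most `2α|U|/β` vertices of degree `> β` in `G[U]`, so each round of
the peeling keeps at most a `2α/β` fraction of the unassigned vertices, and at most
`|V| (2α/β)^(i+1)` vertices survive round `i`.

Every vertex `w` of finite layer lies below at most `β` of its neighbours, so it occurs in at most
`β` of the unions defining the dependency graphs of the next layer. Hence
`S_i = ∑_{ℓ v ≤ i} |D(ℓ, v)|` obeys `S_{i+1} ≤ |V| + β S_i`, so `S_i ≤ |V| (β+1)^i ≤ |V| x`, and
Markov's inequality leaves at most `|V| / x` vertices of the second kind.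

Both counts are at most `|V| 2^(-y)` with `y = log x / log_{β/(2α)} (β+1) ≤ log x`.
-/

open Finset

lemma Finset.card_filter_lt_mul_le_sum {ι : Type*} (s : Finset ι) (f : ι → ℝ) (t : ℝ)
    (hf : ∀ i ∈ s, 0 ≤ f i) : #(s.filter (t < f ·)) * t ≤ ∑ i ∈ s, f i :=
  calc #(s.filter (t < f ·)) * t = ∑ _i ∈ s.filter (t < f ·), t := by
        rw [sum_const, nsmul_eq_mul]
    _ ≤ ∑ i ∈ s.filter (t < f ·), f i := sum_le_sum fun i hi => (mem_filter.1 hi).2.le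
    _ ≤ ∑ i ∈ s, f i := sum_le_sum_of_subset_of_nonneg (filter_subset _ _) fun i hi _ => hf i hi

def highDegreeIn (G : SimpleGraph V) (U : Set V) (β : ℕ) : Set V :=
  {v | v ∈ U ∧ β < (G.neighborSet v ∩ U).ncard}

namespace HasArboricity

variable [Fintype V] {G : SimpleGraph V} {a : ℕ}

lemma ncard_edgeSet_le (hG : HasArboricity G a) (H : G.Subgraph) :
    H.edgeSet.ncard ≤ a * H.verts.ncard := by
  by_cases h2 : 2 ≤ H.verts.ncard
  · exact (hG H h2).trans (Nat.mul_le_mul_left a (Nat.sub_le _ _))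
  · suffices H.edgeSet = ∅ by simp [this]
    refine Set.eq_empty_iff_forall_notMem.2 fun e he => h2 ?_
    induction e using Sym2.ind with
    | h u w =>
      have huw : H.Adj u w := he
      rw [← Set.ncard_pair huw.ne]
      exact Set.ncard_le_ncard (Set.pair_subset huw.fst_mem huw.snd_mem)

lemma mul_ncard_highDegreeIn_le (hG : HasArboricity G a) (U : Set V) (β : ℕ) :
    β * (highDegreeIn G U β).ncard ≤ 2 * a * U.ncard := by
  set H := (⊤ : G.Subgraph).induce U
  set K := H.spanningCoe
  have hdeg : ∀ v ∈ highDegreeIn G U β, β + 1 ≤ K.degree v := by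
    rintro v ⟨hvU, hv⟩
    have hN : K.neighborSet v = G.neighborSet v ∩ U := by
      ext w
      simp [K, H, hvU, and_comm]
    rw [← SimpleGraph.card_neighborSet_eq_degree, Set.fintypeCard_eq_ncard, hN]
    exact hv
  have hK : #K.edgeFinset = H.edgeSet.ncard := by
    rw [← Set.ncard_coe_finset, SimpleGraph.coe_edgeFinset,
      SimpleGraph.Subgraph.edgeSet_spanningCoe]
  calc β * (highDegreeIn G U β).ncard
      ≤ ∑ _v ∈ (highDegreeIn G U β).toFinset, (β + 1) := by
        rw [sum_const, smul_eq_mul, ← Set.ncard_eq_toFinset_card', mul_comm]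
        exact Nat.mul_le_mul_left _ (Nat.le_succ β)
    _ ≤ ∑ v, K.degree v :=
        (sum_le_sum fun v hv => hdeg v (Set.mem_toFinset.1 hv)).trans
          (sum_le_sum_of_subset (subset_univ _))
    _ = 2 * H.edgeSet.ncard := by rw [K.sum_degrees_eq_twice_card_edges, hK]
    _ ≤ 2 * a * U.ncard := by
        rw [mul_assoc]; exact Nat.mul_le_mul_left 2 (hG.ncard_edgeSet_le H)

end HasArboricity

section Layers

variable (G : SimpleGraph V) (S : Set V) (β : ℕ)

lemma assignedUpTo_mono : Monotone (assignedUpTo G S β) :=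
  monotone_nat_of_le_succ fun _ => Set.subset_union_left

lemma mem_assignedUpTo_iff {v : V} {i : ℕ} :
    v ∈ assignedUpTo G S β i ↔ indSigma G S β v ≤ i := by
  constructor
  · intro hv
    rw [indSigma, dif_pos ⟨i, hv⟩]
    exact_mod_cast Nat.sInf_le hv
  · intro hle
    rw [indSigma] at hle
    split at hle
    · next h => exact assignedUpTo_mono G S β (by exact_mod_cast hle) (Nat.sInf_mem h)
    · simp at hle

lemma indSigma_isPartialBetaPartition [Finite V] :
    IsPartialBetaPartition G β (indSigma G S β) := by
  intro v hv
  obtain ⟨j, hj⟩ := ENat.ne_top_iff_exists.1 hv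
  have hvj : v ∈ assignedUpTo G S β j := (mem_assignedUpTo_iff G S β).2 hj.ge
  rw [← hj]
  cases j with
  | zero => exact (Set.ncard_le_ncard fun w hw => hw.1).trans hvj.2
  | succ k =>
    have hvk : v ∉ assignedUpTo G S β k := by
      rw [mem_assignedUpTo_iff, ← hj]
      exact_mod_cast Nat.not_succ_le_self k
    refine (Set.ncard_le_ncard ?_).trans ((hvj.resolve_left hvk).2)
    rintro w ⟨hadj, hw⟩
    exact ⟨hadj, fun hwk => Nat.not_succ_le_self k
      (by exact_mod_cast hw.trans ((mem_assignedUpTo_iff G S β).1 hwk))⟩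

lemma compl_assignedUpTo_zero_subset :
    (assignedUpTo G Set.univ β 0)ᶜ ⊆ highDegreeIn G Set.univ β := by
  intro v hv
  simpa [assignedUpTo, highDegreeIn] using hv

lemma compl_assignedUpTo_succ_subset (i : ℕ) :
    (assignedUpTo G Set.univ β (i + 1))ᶜ ⊆ highDegreeIn G (assignedUpTo G Set.univ β i)ᶜ β := by
  intro v hv
  simp only [assignedUpTo, Set.compl_union, Set.mem_inter_iff, Set.mem_compl_iff,
    Set.mem_ofPred_eq, Set.mem_univ, true_and, not_le] at hv
  exact hv

end Layers

lemma HasArboricity.pow_mul_ncard_compl_assignedUpTo_le [Fintype V] {G : SimpleGraph V}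
    {a : ℕ} (hG : HasArboricity G a) (β i : ℕ) :
    β ^ (i + 1) * (assignedUpTo G Set.univ β i)ᶜ.ncard ≤ (2 * a) ^ (i + 1) * Fintype.card V := by
  induction i with
  | zero =>
    rw [zero_add, pow_one, pow_one, ← Nat.card_eq_fintype_card, ← Set.ncard_univ]
    exact (Nat.mul_le_mul_left β (Set.ncard_le_ncard (compl_assignedUpTo_zero_subset G β))).trans
      (hG.mul_ncard_highDegreeIn_le Set.univ β)
  | succ i ih =>
    have hstep : β * (assignedUpTo G Set.univ β (i + 1))ᶜ.ncard ≤
        2 * a * (assignedUpTo G Set.univ β i)ᶜ.ncard :=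
      (Nat.mul_le_mul_left β (Set.ncard_le_ncard (compl_assignedUpTo_succ_subset G β i))).trans
        (hG.mul_ncard_highDegreeIn_le _ β)
    calc β ^ (i + 2) * (assignedUpTo G Set.univ β (i + 1))ᶜ.ncard
        = β ^ (i + 1) * (β * (assignedUpTo G Set.univ β (i + 1))ᶜ.ncard) := by ring
      _ ≤ β ^ (i + 1) * (2 * a * (assignedUpTo G Set.univ β i)ᶜ.ncard) :=
          Nat.mul_le_mul_left _ hstep
      _ = 2 * a * (β ^ (i + 1) * (assignedUpTo G Set.univ β i)ᶜ.ncard) := by ring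
      _ ≤ 2 * a * ((2 * a) ^ (i + 1) * Fintype.card V) := Nat.mul_le_mul_left _ ih
      _ = (2 * a) ^ (i + 2) * Fintype.card V := by ring

lemma HasArboricity.ncard_compl_assignedUpTo_le [Fintype V] {G : SimpleGraph V} {a β : ℕ}
    (hG : HasArboricity G a) (hβ : 0 < β) (i : ℕ) :
    ((assignedUpTo G Set.univ β i)ᶜ.ncard : ℝ) ≤
      Fintype.card V * ((β : ℝ) / (2 * a))⁻¹ ^ (i + 1) := by
  have h : (β : ℝ) ^ (i + 1) * (assignedUpTo G Set.univ β i)ᶜ.ncard ≤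
      (2 * a) ^ (i + 1) * Fintype.card V := by
    exact_mod_cast hG.pow_mul_ncard_compl_assignedUpTo_le β i
  rw [inv_div, div_pow, mul_div_assoc', le_div_iff₀ (by positivity)]
  linarith

section DependencyGraph

variable (G : SimpleGraph V) (σ : V → ℕ∞)

lemma depAux_eq_depGraph {v : V} {m : ℕ} (h : (σ v).toNat ≤ m) :
    depAux G σ m v = depGraph G σ v := by
  induction m with
  | zero => rw [depGraph, Nat.le_zero.1 h]
  | succ k ih =>
    rcases h.eq_or_lt with heq | hlt
    · rw [depGraph, heq]
    · have hne : σ v ≠ ((k + 1 : ℕ) : ℕ∞) := fun hc => by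
        rw [hc, ENat.toNat_natCast] at hlt; exact lt_irrefl _ hlt
      rw [depAux, if_neg hne]
      exact ih (Nat.lt_succ_iff.1 hlt)

lemma depGraph_of_eq_zero {v : V} (h : σ v = 0) : depGraph G σ v = {v} := by
  rw [depGraph, h, ENat.toNat_zero, depAux, if_pos h]

lemma depGraph_of_eq_succ {v : V} {i : ℕ} (h : σ v = ((i + 1 : ℕ) : ℕ∞)) :
    depGraph G σ v = insert v (⋃ w ∈ {w | G.Adj v w ∧ σ w < σ v}, depGraph G σ w) := by
  have hv : (σ v).toNat = i + 1 := by rw [h, ENat.toNat_natCast]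
  rw [depGraph, hv, depAux, if_pos h]
  refine congrArg _ (Set.iUnion₂_congr fun w hw => depAux_eq_depGraph G σ ?_)
  have hw : σ w < (i : ℕ∞) + 1 := by exact_mod_cast h ▸ hw.2
  exact ENat.toNat_le_of_le_natCast ((ENat.lt_add_one_iff (ENat.natCast_ne_top i)).1 hw)

lemma ncard_depGraph_le [Fintype V] {v : V} (hv : σ v ≠ ⊤) :
    (depGraph G σ v).ncard ≤
      1 + ∑ w ∈ Finset.univ.filter (fun w => G.Adj v w ∧ σ w < σ v), (depGraph G σ w).ncard := by
  obtain ⟨j, hj⟩ := ENat.ne_top_iff_exists.1 hv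
  cases j with
  | zero =>
    rw [depGraph_of_eq_zero G σ (by simpa using hj.symm), Set.ncard_singleton]
    exact Nat.le_add_right _ _
  | succ i =>
    rw [depGraph_of_eq_succ G σ hj.symm, add_comm 1]
    refine (Set.ncard_insert_le _ _).trans (Nat.add_le_add_right ?_ 1)
    simpa using (Finset.univ.filter (fun w => G.Adj v w ∧ σ w < σ v)).set_ncard_biUnion_le
      (depGraph G σ)

end DependencyGraph

namespace IsPartialBetaPartition

variable [Fintype V] {G : SimpleGraph V} {β : ℕ} {σ : V → ℕ∞}

lemma sum_sum_lowerNeighbors_le (hσ : IsPartialBetaPartition G β σ) (f : V → ℕ) (i : ℕ) :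
    ∑ v ∈ univ.filter (fun v => σ v ≤ i + 1),
        ∑ w ∈ univ.filter (fun w => G.Adj v w ∧ σ w < σ v), f w ≤
      β * ∑ w ∈ univ.filter (fun w => σ w ≤ i), f w := by
  -- after swapping the sums, `w` is counted once per neighbour in a higher layer
  rw [sum_comm' (t' := univ.filter (fun w => σ w ≤ i))
      (s' := fun w => univ.filter (fun v => σ v ≤ i + 1 ∧ G.Adj v w ∧ σ w < σ v))]
  · rw [mul_sum]
    refine sum_le_sum fun w hw => ?_
    rw [sum_const, smul_eq_mul]
    refine Nat.mul_le_mul_right _ ?_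
    have hw : σ w ≠ ⊤ := ne_top_of_le_ne_top (ENat.natCast_ne_top i) (mem_filter.1 hw).2
    rw [← Set.ncard_coe_finset]
    refine (Set.ncard_le_ncard fun v hv => ?_).trans (hσ w hw)
    simp only [coe_filter, mem_univ, true_and, Set.mem_ofPred_eq] at hv
    exact ⟨hv.2.1.symm, hv.2.2.le⟩
  · intro v w
    simp only [mem_filter, mem_univ, true_and]
    constructor
    · rintro ⟨hv, hadj, hlt⟩
      exact ⟨⟨hv, hadj, hlt⟩, (ENat.lt_add_one_iff (ENat.natCast_ne_top i)).1 (hlt.trans_le hv)⟩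
    · rintro ⟨hvw, -⟩
      exact hvw

lemma sum_ncard_depGraph_le (hσ : IsPartialBetaPartition G β σ) (i : ℕ) :
    ∑ v ∈ univ.filter (fun v => σ v ≤ i), (depGraph G σ v).ncard ≤
      Fintype.card V * (β + 1) ^ i := by
  induction i with
  | zero =>
    calc ∑ v ∈ univ.filter (fun v => σ v ≤ (0 : ℕ)), (depGraph G σ v).ncard
        = ∑ v ∈ univ.filter (fun v => σ v ≤ (0 : ℕ)), 1 := sum_congr rfl fun v hv => by
          rw [depGraph_of_eq_zero G σ (by simpa using hv), Set.ncard_singleton]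
      _ ≤ Fintype.card V * (β + 1) ^ 0 := by simpa using card_le_univ _
  | succ i ih =>
    calc ∑ v ∈ univ.filter (fun v => σ v ≤ (i + 1 : ℕ)), (depGraph G σ v).ncard
        ≤ ∑ v ∈ univ.filter (fun v => σ v ≤ i + 1),
            (1 + ∑ w ∈ univ.filter (fun w => G.Adj v w ∧ σ w < σ v), (depGraph G σ w).ncard) := by
          push_cast
          exact sum_le_sum fun v hv => ncard_depGraph_le G σ
            (ne_top_of_le_ne_top (by simp) (mem_filter.1 hv).2)
      _ ≤ Fintype.card V + β * (Fintype.card V * (β + 1) ^ i) := by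
          rw [sum_add_distrib, sum_const, smul_eq_mul, mul_one]
          exact add_le_add (card_le_univ _)
            ((hσ.sum_sum_lowerNeighbors_le _ i).trans (Nat.mul_le_mul_left β ih))
      _ ≤ Fintype.card V * (β + 1) ^ (i + 1) := by
          have := Nat.one_le_pow i (β + 1) (Nat.succ_pos β)
          rw [pow_succ]
          nlinarith

lemma ncard_setOf_sq_lt_ncard_depGraph_le (hσ : IsPartialBetaPartition G β σ) {i : ℕ} {x : ℝ}
    (hx : 0 < x) (hix : ((β : ℝ) + 1) ^ i ≤ x) :
    ({v | σ v ≤ i ∧ x ^ 2 < ((depGraph G σ v).ncard : ℝ)}.ncard : ℝ) ≤ Fintype.card V * x⁻¹ := by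
  have hset : {v | σ v ≤ i ∧ x ^ 2 < ((depGraph G σ v).ncard : ℝ)} =
      ↑((univ.filter (fun v => σ v ≤ i)).filter
        (fun v => x ^ 2 < ((depGraph G σ v).ncard : ℝ))) := by
    ext v; simp
  have hmarkov := (Finset.card_filter_lt_mul_le_sum _ (fun v => ((depGraph G σ v).ncard : ℝ))
    (x ^ 2) fun _ _ => Nat.cast_nonneg _).trans
      (show _ ≤ (Fintype.card V * ((β : ℝ) + 1) ^ i : ℝ) by
        exact_mod_cast hσ.sum_ncard_depGraph_le i)
  rw [hset, Set.ncard_coe_finset, le_mul_inv_iff₀ hx]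
  nlinarith [(Nat.cast_nonneg (Fintype.card V) : (0 : ℝ) ≤ _)]

end IsPartialBetaPartition

namespace Real

lemma exp_neg_le_two_rpow_neg {y : ℝ} (hy : 0 ≤ y) : exp (-y) ≤ 2 ^ (-y) := by
  rw [← exp_one_rpow]
  exact rpow_le_rpow_of_nonpos two_pos (by linarith [add_one_le_exp 1]) (neg_nonpos.2 hy)

lemma pow_natFloor_logb_le {c x : ℝ} (hc : 1 < c) (hx : 1 ≤ x) : c ^ ⌊logb c x⌋₊ ≤ x := by
  rw [← rpow_natCast, ← le_logb_iff_rpow_le hc (by linarith)]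
  exact Nat.floor_le (logb_nonneg hc hx)

lemma log_div_logb_eq {b c x : ℝ} : log x / logb b c = logb c x * log b := by
  rw [logb, logb, div_div_eq_mul_div, mul_div_right_comm]

lemma inv_pow_natFloor_logb_succ_le {b c x : ℝ} (hb : 1 ≤ b) (hc : 1 < c) (hx : 1 ≤ x) :
    b⁻¹ ^ (⌊logb c x⌋₊ + 1) ≤ 2 ^ (-(log x / logb b c)) := by
  have hL := logb_nonneg hc hx
  calc b⁻¹ ^ (⌊logb c x⌋₊ + 1) = b ^ (-((⌊logb c x⌋₊ + 1 : ℕ) : ℝ)) := by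
        rw [rpow_neg (by linarith), rpow_natCast, inv_pow]
    _ ≤ b ^ (-logb c x) := by
        refine rpow_le_rpow_of_exponent_le hb (neg_le_neg ?_)
        exact_mod_cast (Nat.lt_floor_add_one _).le
    _ = exp (-(log x / logb b c)) := by
        rw [rpow_def_of_pos (by linarith), log_div_logb_eq]; ring_nf
    _ ≤ 2 ^ (-(log x / logb b c)) :=
        exp_neg_le_two_rpow_neg (by rw [log_div_logb_eq]; exact mul_nonneg hL (log_nonneg hb))

lemma inv_le_two_rpow_neg_log_div_logb {b c x : ℝ} (hb : 1 ≤ b) (hbc : b ≤ c) (hc : 1 < c)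
    (hx : 1 ≤ x) : x⁻¹ ≤ 2 ^ (-(log x / logb b c)) := by
  have hy : log x / logb b c ≤ log x := by
    rw [log_div_logb_eq, logb, div_mul_eq_mul_div, div_le_iff₀ (log_pos hc)]
    exact mul_le_mul_of_nonneg_left (log_le_log (by linarith) hbc) (log_nonneg hx)
  calc x⁻¹ = exp (-log x) := by rw [exp_neg, exp_log (by linarith)]
    _ ≤ exp (-(log x / logb b c)) := exp_le_exp.2 (neg_le_neg hy)
    _ ≤ 2 ^ (-(log x / logb b c)) := exp_neg_le_two_rpow_neg (by
        rw [log_div_logb_eq]; exact mul_nonneg (logb_nonneg hc hx) (log_nonneg hb))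

end Real

lemma setOf_not_and_subset_union (σ : V → ℕ∞) (D : V → ℝ) (t L : ℝ) {i : ℕ} (hi : (i : ℝ) ≤ L) :
    {v | ¬ (D v ≤ t ∧ σ v ≠ ⊤ ∧ ((σ v).toNat : ℝ) ≤ L)} ⊆
      {v | ¬ σ v ≤ i} ∪ {v | σ v ≤ i ∧ t < D v} := by
  intro v hv
  by_cases hvi : σ v ≤ i
  · refine Or.inr ⟨hvi, lt_of_not_ge fun hD => hv ⟨hD, ne_top_of_le_ne_top (by simp) hvi, ?_⟩⟩
    exact (Nat.cast_le.2 (ENat.toNat_le_of_le_natCast hvi)).trans hi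
  · exact Or.inl hvi

/-- The set of vertices `v` failing both `|D(ℓ,v)| ≤ x²` and
`ℓ(v) ≤ log_{β+1} x` has size at most `|V| · 2^{1 - log x / log_{β/(2α)}(β+1)}`. -/
theorem few_bad_vertices [Fintype V] (G : SimpleGraph V) (α β : ℕ) (ε x : ℝ)
    (hε : 0 < ε) (hβ : (2 + ε) * α ≤ (β : ℝ)) (hG : HasArboricity G α)
    (hx : 1 < x) :
    ({v : V | ¬ (((depGraph G (indSigma G Set.univ β) v).ncard : ℝ) ≤ x ^ 2 ∧
        indSigma G Set.univ β v ≠ ⊤ ∧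
        (((indSigma G Set.univ β v).toNat : ℝ) ≤ Real.log x / Real.log ((β : ℝ) + 1)))}.ncard : ℝ)
      ≤ (Fintype.card V) *
          (2 : ℝ) ^ (1 - Real.log x / Real.logb ((β : ℝ) / (2 * α)) ((β : ℝ) + 1)) := by
  set σ := indSigma G Set.univ β
  set y := Real.log x / Real.logb ((β : ℝ) / (2 * α)) ((β : ℝ) + 1)
  set n := Fintype.card V
  rcases Nat.eq_zero_or_pos α with rfl | hα
  -- `β / (2 * 0) = 0` and `logb 0 _ = 0`, so the bound reads `2 |V|`
  · have hy : y = 0 := by simp [y]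
    rw [hy, sub_zero, Real.rpow_one]
    refine le_trans ?_ (le_mul_of_one_le_right n.cast_nonneg one_le_two)
    exact_mod_cast (Set.ncard_le_card _).trans_eq Nat.card_eq_fintype_card
  have hα1 : (1 : ℝ) ≤ α := by exact_mod_cast hα
  have h2α : 2 * (α : ℝ) ≤ β := by nlinarith
  have hβ0 : 0 < β := by exact_mod_cast (show (0 : ℝ) < β by linarith)
  have hb : 1 ≤ (β : ℝ) / (2 * α) := (one_le_div (by positivity)).2 h2α
  have hbc : (β : ℝ) / (2 * α) ≤ β + 1 := by rw [div_le_iff₀ (by positivity)]; nlinarith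
  have hc : (1 : ℝ) < β + 1 := by linarith
  set i := ⌊Real.logb ((β : ℝ) + 1) x⌋₊
  set B₁ := {v | ¬ σ v ≤ i}
  set B₂ := {v | σ v ≤ i ∧ x ^ 2 < ((depGraph G σ v).ncard : ℝ)}
  have hsub := setOf_not_and_subset_union σ (fun v => ((depGraph G σ v).ncard : ℝ)) (x ^ 2)
    (Real.logb ((β : ℝ) + 1) x) (Nat.floor_le (Real.logb_nonneg hc hx.le))
  have hB₁ : (B₁.ncard : ℝ) ≤ n * 2 ^ (-y) := by
    rw [show B₁ = (assignedUpTo G Set.univ β i)ᶜ from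
      Set.ext fun _ => (mem_assignedUpTo_iff G _ β).not.symm]
    exact (hG.ncard_compl_assignedUpTo_le hβ0 i).trans
      (mul_le_mul_of_nonneg_left (Real.inv_pow_natFloor_logb_succ_le hb hc hx.le) n.cast_nonneg)
  have hB₂ := ((indSigma_isPartialBetaPartition G Set.univ β).ncard_setOf_sq_lt_ncard_depGraph_le
    (by linarith) (Real.pow_natFloor_logb_le hc hx.le)).trans
      (mul_le_mul_of_nonneg_left (Real.inv_le_two_rpow_neg_log_div_logb hb hbc hc hx.le)
        n.cast_nonneg)
  rw [Real.log_div_log]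
  calc _ ≤ ((B₁ ∪ B₂).ncard : ℝ) := Nat.cast_le.2 (Set.ncard_le_ncard hsub)
    _ ≤ _ := (Nat.cast_le.2 (Set.ncard_union_le _ _)).trans_eq (Nat.cast_add _ _)
    _ ≤ n * 2 ^ (-y) + n * 2 ^ (-y) := add_le_add hB₁ hB₂
    _ = n * 2 ^ (1 - y) := by rw [sub_eq_add_neg, Real.rpow_add two_pos, Real.rpow_one]; ring
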